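/- arXiv:2211.15109 — 2 statements merged into one kernel-verified Lean document; each statement's English description precedes it below -/
import Mathlib

section
/- Let 𝔓 be a Lie algebra of polynomial vector fields on ℝ^n (n ≥ 1) containing all constant fields and the Euler field E, such that 𝔓_0 = ⟨E⟩_ℝ. Then the centroid C(𝔓) equals ℝ·Id, the scalar multiples of the identity map. -/
/-! A centroid element `f` commutes with `ad E`, so `[f E, E] = f [E, E] = 0`: the components of
`f E` are fixed by the Euler operator `∑ xⁱ ∂ᵢ`, hence linear, and `f E = c E` because `𝔓₀ = ℝ E`.
Since `[E, ∂ₖ] = -∂ₖ`, also `f ∂ₖ = c ∂ₖ`. For any `Z ∈ 𝔓` the field `R = f Z - c Z` then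
satisfies `[R, Y] = [Z, f Y] - c [Z, Y] = 0` for `Y = ∂ₖ` and `Y = E`: its components are constant
and fixed by the Euler operator, so `R = 0`. -/

open MvPolynomial

/-- Polynomial vector fields on ℝⁿ, given by their polynomial components. -/
abbrev PVF (n : ℕ) : Type := Fin n → MvPolynomial (Fin n) ℝ

/-- The Lie bracket of polynomial vector fields:
`[X,Y]^j = Σ_i (X^i ∂(Y^j)/∂x^i − Y^i ∂(X^j)/∂x^i)`. -/
noncomputable def vbracket {n : ℕ} (X Y : PVF n) : PVF n :=
  fun j => ∑ i : Fin n, (X i * pderiv i (Y j) - Y i * pderiv i (X j))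

/-- The Euler vector field `E = Σ_i x^i ∂/∂x^i`. -/
noncomputable def eulerVF (n : ℕ) : PVF n := fun j => MvPolynomial.X j

/-- The constant vector field `∂/∂x^i`. -/
noncomputable def constVF {n : ℕ} (i : Fin n) : PVF n := fun j => if j = i then 1 else 0

/-- A polynomial vector field is homogeneous of degree `i` (an element of `𝔥_i`)
if all its components are homogeneous polynomials of degree `i+1` (the zero field
is homogeneous of every degree). -/
def IsHomog {n : ℕ} (i : ℤ) (X : PVF n) : Prop :=
  (∃ d : ℕ, (d : ℤ) = i + 1 ∧ ∀ k, (X k).IsHomogeneous d) ∨ X = 0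

namespace MvPolynomial

variable {R σ : Type*} [Fintype σ]

theorem sum_X_mul_pderiv_monomial [CommSemiring R] (m : σ →₀ ℕ) (r : R) :
    ∑ i, X i * pderiv i (monomial m r) = m.degree • monomial m r := by
  simp_rw [X_mul_pderiv_monomial, ← Finset.sum_smul, Finsupp.degree_eq_sum]

theorem coeff_sum_X_mul_pderiv [CommSemiring R] (p : MvPolynomial σ R) (m : σ →₀ ℕ) :
    coeff m (∑ i, X i * pderiv i p) = m.degree • coeff m p := by
  classical
  induction p using MvPolynomial.induction_on' with
  | add p q hp hq =>
    simp only [map_add, mul_add, Finset.sum_add_distrib, coeff_add, hp, hq, smul_add]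
  | monomial m' r =>
    rw [sum_X_mul_pderiv_monomial, coeff_smul, coeff_monomial]
    split_ifs with h
    · rw [h]
    · rw [smul_zero, smul_zero]

theorem isHomogeneous_of_sum_X_mul_pderiv_eq [CommRing R] [IsDomain R] [CharZero R]
    {p : MvPolynomial σ R} {n : ℕ} (h : ∑ i, X i * pderiv i p = n • p) : p.IsHomogeneous n := by
  intro m hm
  have hcoeff := coeff_sum_X_mul_pderiv p m
  rw [h, coeff_smul, nsmul_eq_mul, nsmul_eq_mul] at hcoeff
  rw [Pi.one_def, ← Finsupp.degree_eq_weight_one]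
  exact_mod_cast (mul_right_cancel₀ hm hcoeff).symm

end MvPolynomial

section VectorFields

variable {n : ℕ}

theorem vbracket_self (Z : PVF n) : vbracket Z Z = 0 := by
  funext j
  simp [vbracket]

theorem vbracket_smul_left (c : ℝ) (A B : PVF n) : vbracket (c • A) B = c • vbracket A B := by
  funext j
  simp only [vbracket, Pi.smul_apply, Finset.smul_sum, Derivation.map_smul, smul_sub,
    smul_mul_assoc, mul_smul_comm]

theorem vbracket_smul_right (c : ℝ) (A B : PVF n) : vbracket A (c • B) = c • vbracket A B := by
  funext j
  simp only [vbracket, Pi.smul_apply, Finset.smul_sum, Derivation.map_smul, smul_sub,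
    smul_mul_assoc, mul_smul_comm]

theorem vbracket_sub_left (A B C : PVF n) :
    vbracket (A - B) C = vbracket A C - vbracket B C := by
  funext j
  simp only [vbracket, Pi.sub_apply, map_sub, ← Finset.sum_sub_distrib]
  exact Finset.sum_congr rfl fun i _ => by ring

theorem vbracket_constVF_right (Z : PVF n) (k : Fin n) :
    vbracket Z (constVF k) = fun j => -pderiv k (Z j) := by
  funext j
  have hconst : ∀ i, pderiv i (constVF k j : MvPolynomial (Fin n) ℝ) = 0 := fun i => by
    unfold constVF; split_ifs <;> simp
  simp only [vbracket, hconst, mul_zero, zero_sub, Finset.sum_neg_distrib]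
  simp [constVF]

theorem vbracket_eulerVF_right (Z : PVF n) :
    vbracket Z (eulerVF n) = fun j => Z j - ∑ i, X i * pderiv i (Z j) := by
  funext j
  simp [vbracket, eulerVF, pderiv_X, Pi.single_apply, Finset.sum_sub_distrib]

theorem vbracket_eulerVF_constVF (k : Fin n) :
    vbracket (eulerVF n) (constVF k) = -constVF k := by
  rw [vbracket_constVF_right]
  funext j
  simp [eulerVF, constVF, pderiv_X, Pi.single_apply, eq_comm]

theorem isHomog_zero_of_vbracket_eulerVF_eq_zero {Z : PVF n} (h : vbracket Z (eulerVF n) = 0) :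
    IsHomog 0 Z := by
  refine Or.inl ⟨1, by norm_num, fun j => isHomogeneous_of_sum_X_mul_pderiv_eq ?_⟩
  have hj := congrFun h j
  rw [vbracket_eulerVF_right] at hj
  rw [one_smul]
  exact (sub_eq_zero.mp hj).symm

theorem eq_zero_of_vbracket_constVF_eq_zero_of_vbracket_eulerVF_eq_zero {Z : PVF n}
    (hconst : ∀ k, vbracket Z (constVF k) = 0) (heuler : vbracket Z (eulerVF n) = 0) : Z = 0 := by
  funext j
  have hpderiv : ∀ k, pderiv k (Z j) = 0 := fun k => by
    simpa [vbracket_constVF_right] using congrFun (hconst k) j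
  simpa [vbracket_eulerVF_right, hpderiv] using congrFun heuler j

end VectorFields

section Centroid

variable {n : ℕ}

def IsCentroidOn (P : Submodule ℝ (PVF n)) (f : PVF n →ₗ[ℝ] PVF n) : Prop :=
  ∀ X ∈ P, ∀ Y ∈ P, f (vbracket X Y) = vbracket (f X) Y ∧ f (vbracket X Y) = vbracket X (f Y)

variable {P : Submodule ℝ (PVF n)} {f : PVF n →ₗ[ℝ] PVF n} {X Y : PVF n} {c : ℝ}

theorem IsCentroidOn.map_vbracket_of_map_eq_smul (hf : IsCentroidOn P f) (hX : X ∈ P) (hY : Y ∈ P)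
    (hfX : f X = c • X) : f (vbracket X Y) = c • vbracket X Y := by
  rw [(hf X hX Y hY).1, hfX, vbracket_smul_left]

theorem IsCentroidOn.vbracket_map_sub_smul_eq_zero (hf : IsCentroidOn P f) (hX : X ∈ P)
    (hY : Y ∈ P) (hfY : f Y = c • Y) : vbracket (f X - c • X) Y = 0 := by
  rw [vbracket_sub_left, vbracket_smul_left, ← (hf X hX Y hY).1, (hf X hX Y hY).2, hfY,
    vbracket_smul_right, sub_self]

end Centroid

theorem centroid_eq_scalars_of_P0_eq_span_euler_general (n : ℕ)
    (P : Submodule ℝ (PVF n))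
    (hE : eulerVF n ∈ P)
    (hconst : ∀ i : Fin n, constVF i ∈ P)
    (hP0 : ∀ Y ∈ P, IsHomog 0 Y → ∃ c : ℝ, Y = c • eulerVF n)
    (f : PVF n →ₗ[ℝ] PVF n) (hfP : ∀ X ∈ P, f X ∈ P)
    (hcent : ∀ X ∈ P, ∀ Y ∈ P,
      f (vbracket X Y) = vbracket (f X) Y ∧ f (vbracket X Y) = vbracket X (f Y)) :
    ∃ c : ℝ, ∀ X ∈ P, f X = c • X := by
  have hf : IsCentroidOn P f := hcent
  obtain ⟨c, hfE⟩ : ∃ c : ℝ, f (eulerVF n) = c • eulerVF n := by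
    refine hP0 _ (hfP _ hE) (isHomog_zero_of_vbracket_eulerVF_eq_zero ?_)
    rw [← (hf _ hE _ hE).1, vbracket_self, map_zero]
  have hfconst : ∀ k, f (constVF k) = c • constVF k := fun k => by
    simpa [vbracket_eulerVF_constVF] using hf.map_vbracket_of_map_eq_smul hE (hconst k) hfE
  refine ⟨c, fun Z hZ => sub_eq_zero.mp ?_⟩
  exact eq_zero_of_vbracket_constVF_eq_zero_of_vbracket_eulerVF_eq_zero
    (fun k => hf.vbracket_map_sub_smul_eq_zero hZ (hconst k) (hfconst k))
    (hf.vbracket_map_sub_smul_eq_zero hZ hE hfE)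

theorem centroid_eq_scalars_of_P0_eq_span_euler (n : ℕ) (hn : 1 ≤ n)
    (P : Submodule ℝ (PVF n))
    (hE : eulerVF n ∈ P)
    (hconst : ∀ i : Fin n, constVF i ∈ P)
    (hbr : ∀ X ∈ P, ∀ Y ∈ P, vbracket X Y ∈ P)
    (hP0 : ∀ Y ∈ P, IsHomog 0 Y → ∃ c : ℝ, Y = c • eulerVF n)
    (f : PVF n →ₗ[ℝ] PVF n) (hfP : ∀ X ∈ P, f X ∈ P)
    (hcent : ∀ X ∈ P, ∀ Y ∈ P,
      f (vbracket X Y) = vbracket (f X) Y ∧ f (vbracket X Y) = vbracket X (f Y)) :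
    ∃ c : ℝ, ∀ X ∈ P, f X = c • X :=
  centroid_eq_scalars_of_P0_eq_span_euler_general n P hE hconst hP0 f hfP hcent
end

section
/- Let 𝔓 be a Lie algebra of polynomial vector fields on ℝ^n (n ≥ 2) containing all constant fields and the Euler field E, with every element of [𝔓₁,𝔓_{−1}] lying in [𝔓₀,𝔓₀]. Then every quasiderivation (f,f,g) of degree 0 with f(E) = 0 has the form (L_X, L_X, L_X + k), where X is a homogeneous degree-0 vector field in 𝔥₀, L_X = [X,·], and k is an endomorphism of 𝔓 vanishing on 𝔓_i for i ≠ 0 and on 𝔓₀ ∩ [𝔓,𝔓], arbitrary on a complement of 𝔓₀ ∩ [𝔓,𝔓] in 𝔓₀. -/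
open MvPolynomial

/-!
Let `X₀` be the linear field with `[X₀, ∂ᵢ] = f ∂ᵢ`. Then `D = f - ad X₀` and `h = g - ad X₀`
again satisfy `[D X, Y] + [X, D Y] = h [X, Y]`, and `D` kills `E` and all `∂ᵢ`. Bracketing with
`E` shows `h = D` on `𝔓ᵢ` for `i ≠ 0`. For `Y ∈ 𝔓ₑ`, `e ≥ 0`, we get `[D Y, ∂ₖ] = h [Y, ∂ₖ]`,
which vanishes by induction on `e`: for `e ≠ 1` because `h = D` in degree `e - 1`, and for
`e = 1` because `[Y, ∂ₖ] = [A, B]` with `A, B ∈ 𝔓₀` and `h [A, B] = [D A, B] + [A, D B]`. A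
homogeneous field of degree `≥ 0` commuting with every `∂ₖ` is zero by Euler's identity, so
`D = 0` on each `𝔓ₑ`; and `𝔓` is the sum of its `𝔓ₑ`, since the homogeneous components of a
field are eigenvectors of `ad E` with distinct eigenvalues.
-/

namespace MvPolynomial

section CommSemiring

variable {σ R : Type*} [CommSemiring R] {p q : MvPolynomial σ R} {a b : ℕ}

theorem IsHomogeneous.eq_C_coeff_zero (hp : p.IsHomogeneous 0) : p = C (coeff 0 p) :=
  totalDegree_eq_zero_iff_eq_C.mp ((totalDegree_zero_iff_isHomogeneous _).mpr hp)

theorem IsHomogeneous.pderiv_eq_zero (hp : p.IsHomogeneous 0) (i : σ) : pderiv i p = 0 := by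
  rw [hp.eq_C_coeff_zero, pderiv_C]

theorem IsHomogeneous.mul_pderiv (hp : p.IsHomogeneous a) (hq : q.IsHomogeneous b) (i : σ) :
    (p * pderiv i q).IsHomogeneous (a + b - 1) := by
  rcases b with _ | b
  · rw [hq.pderiv_eq_zero, mul_zero]
    exact isHomogeneous_zero _ _ _
  · simpa using hp.mul hq.pderiv

end CommSemiring

theorem IsHomogeneous.eq_zero_of_forall_pderiv_eq_zero {σ R : Type*} [Fintype σ] [CommRing R]
    [IsDomain R] [CharZero R] {p : MvPolynomial σ R} {a : ℕ} (hp : p.IsHomogeneous a)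
    (ha : a ≠ 0) (h : ∀ i, pderiv i p = 0) : p = 0 := by
  have := hp.sum_X_mul_pderiv
  simp only [h, mul_zero, Finset.sum_const_zero] at this
  exact (smul_eq_zero.mp this.symm).resolve_left ha

end MvPolynomial

/-- Lagrange interpolation in the operator `φ` projects onto each eigenvector of a sum. -/
theorem Submodule.mem_of_sum_mem_of_apply_eq_smul {K M ι : Type*} [Field K] [AddCommGroup M]
    [Module K M] {q : Submodule K M} {φ : Module.End K M} (hq : q ≤ q.comap φ) {s : Finset ι}
    {v : ι → M} {μ : ι → K} (hμ : Set.InjOn μ s) (hv : ∀ i ∈ s, φ (v i) = μ i • v i)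
    (hs : ∑ i ∈ s, v i ∈ q) {i : ι} (hi : i ∈ s) : v i ∈ q := by
  classical
  have := Polynomial.aeval_apply_smul_mem_of_le_comap hs (Lagrange.basis s μ i) φ hq
  rwa [map_sum, Finset.sum_eq_single_of_mem i hi,
    Module.End.aeval_apply_of_mem_apply_eq_smul (hv i hi), Lagrange.eval_basis_self hμ hi,
    one_smul] at this
  intro j hj hji
  rw [Module.End.aeval_apply_of_mem_apply_eq_smul (hv j hj), Lagrange.eval_basis_of_ne hji.symm hj,
    zero_smul]

variable {n : ℕ}

noncomputable def toDerivation :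
    PVF n →ₗ[ℝ] Derivation ℝ (MvPolynomial (Fin n) ℝ) (MvPolynomial (Fin n) ℝ) where
  toFun X := ∑ i, X i • pderiv i
  map_add' X Y := by simp only [Pi.add_apply, add_smul, Finset.sum_add_distrib]
  map_smul' r X := by simp [Finset.smul_sum, smul_assoc]

theorem toDerivation_apply (X : PVF n) (p : MvPolynomial (Fin n) ℝ) :
    toDerivation X p = ∑ i, X i * pderiv i p := by
  simp only [toDerivation, LinearMap.coe_mk, AddHom.coe_mk, ← Derivation.coeFnAddMonoidHom_apply,
    map_sum, Finset.sum_apply]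
  simp [Derivation.smul_apply]

theorem toDerivation_apply_X (X : PVF n) (j : Fin n) :
    toDerivation X (MvPolynomial.X j) = X j := by
  simp [toDerivation_apply, pderiv_X, Pi.single_apply]

theorem vbracket_apply (X Y : PVF n) (j : Fin n) :
    vbracket X Y j = toDerivation X (Y j) - toDerivation Y (X j) := by
  simp [vbracket, toDerivation_apply, Finset.sum_sub_distrib]

theorem toDerivation_vbracket (X Y : PVF n) :
    toDerivation (vbracket X Y) = ⁅toDerivation X, toDerivation Y⁆ :=
  MvPolynomial.derivation_ext fun j => by
    rw [toDerivation_apply_X, Derivation.commutator_apply, toDerivation_apply_X,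
      toDerivation_apply_X, vbracket_apply]

theorem toDerivation_vbracket_apply (X Y : PVF n) (p : MvPolynomial (Fin n) ℝ) :
    toDerivation (vbracket X Y) p
      = toDerivation X (toDerivation Y p) - toDerivation Y (toDerivation X p) := by
  rw [toDerivation_vbracket, Derivation.commutator_apply]

theorem vbracket_swap (X Y : PVF n) : vbracket Y X = -vbracket X Y := by
  funext j
  simp [vbracket_apply]

theorem vbracket_leibniz (X Y Z : PVF n) :
    vbracket X (vbracket Y Z) = vbracket (vbracket X Y) Z + vbracket Y (vbracket X Z) := by
  funext j
  simp only [vbracket_apply, toDerivation_vbracket_apply, map_sub, Pi.add_apply]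
  abel

theorem vbracket_sub_left_s17 (X Y Z : PVF n) :
    vbracket (X - Y) Z = vbracket X Z - vbracket Y Z := by
  funext j
  simp only [vbracket_apply, map_sub, Pi.sub_apply, Derivation.coe_sub]
  abel

theorem vbracket_sub_right (X Y Z : PVF n) :
    vbracket X (Y - Z) = vbracket X Y - vbracket X Z := by
  funext j
  simp [vbracket_apply]
  abel

theorem vbracket_add_right (X Y Z : PVF n) :
    vbracket X (Y + Z) = vbracket X Y + vbracket X Z := by
  funext j
  simp [vbracket_apply]
  abel

theorem vbracket_smul_right_s17 (X Y : PVF n) (r : ℝ) : vbracket X (r • Y) = r • vbracket X Y := by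
  funext j
  simp [vbracket_apply, smul_sub]

theorem vbracket_zero_left (X : PVF n) : vbracket 0 X = 0 := by
  funext j
  simp [vbracket_apply]

theorem vbracket_zero_right (X : PVF n) : vbracket X 0 = 0 := by
  funext j
  simp [vbracket_apply]

noncomputable def adV (X : PVF n) : PVF n →ₗ[ℝ] PVF n where
  toFun := vbracket X
  map_add' := vbracket_add_right X
  map_smul' r Y := vbracket_smul_right_s17 X Y r

@[simp]
theorem adV_apply (X Y : PVF n) : adV X Y = vbracket X Y := rfl

theorem toDerivation_constVF (i : Fin n) : toDerivation (constVF i) = pderiv i := by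
  ext p
  simp [toDerivation_apply, constVF]

theorem vbracket_constVF (X : PVF n) (i j : Fin n) :
    vbracket X (constVF i) j = -pderiv i (X j) := by
  simp [vbracket_apply, toDerivation_constVF, constVF, apply_ite]

theorem eulerVF_apply (j : Fin n) : eulerVF n j = MvPolynomial.X j := rfl

theorem isHomog_iff_forall_isHomogeneous {i : ℤ} {d : ℕ} (hd : (d : ℤ) = i + 1) {X : PVF n} :
    IsHomog i X ↔ ∀ k, (X k).IsHomogeneous d := by
  refine ⟨?_, fun h => .inl ⟨d, hd, h⟩⟩
  rintro (⟨d', hd', h⟩ | rfl)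
  · obtain rfl : d' = d := by omega
    exact h
  · exact fun _ => isHomogeneous_zero _ _ _

theorem isHomog_constVF (i : Fin n) : IsHomog (-1) (constVF i) :=
  (isHomog_iff_forall_isHomogeneous (d := 0) (by norm_num)).mpr fun k => by
    unfold constVF
    split_ifs
    exacts [isHomogeneous_one _ _, isHomogeneous_zero _ _ _]

theorem IsHomog.sub {i : ℤ} {X Y : PVF n} (hX : IsHomog i X) (hY : IsHomog i Y) :
    IsHomog i (X - Y) := by
  rcases hX with ⟨d, hd, hXd⟩ | rfl
  · exact (isHomog_iff_forall_isHomogeneous hd).mpr fun k =>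
      (hXd k).sub ((isHomog_iff_forall_isHomogeneous hd).mp hY k)
  · rcases hY with ⟨d, hd, hYd⟩ | rfl
    · exact (isHomog_iff_forall_isHomogeneous hd).mpr fun k => by simpa using (hYd k).neg
    · exact .inr (sub_zero 0)

theorem IsHomog.vbracket {i j : ℤ} {X Y : PVF n} (hX : IsHomog i X) (hY : IsHomog j Y) :
    IsHomog (i + j) (vbracket X Y) := by
  rcases hX with ⟨a, ha, hXa⟩ | rfl
  swap; · exact .inr (vbracket_zero_left Y)
  rcases hY with ⟨b, hb, hYb⟩ | rfl
  swap; · exact .inr (vbracket_zero_right X)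
  rcases Nat.eq_zero_or_pos (a + b) with hab | hab
  · obtain ⟨rfl, rfl⟩ : a = 0 ∧ b = 0 := by omega
    refine .inr (funext fun k => ?_)
    simp [_root_.vbracket, (hXa _).pderiv_eq_zero, (hYb _).pderiv_eq_zero]
  · refine .inl ⟨a + b - 1, by omega, fun k => IsHomogeneous.sum _ _ _ fun l _ => ?_⟩
    exact ((hXa l).mul_pderiv (hYb k) l).sub
      (by simpa [add_comm] using (hYb l).mul_pderiv (hXa k) l)

theorem vbracket_eulerVF {i : ℤ} {X : PVF n} (hX : IsHomog i X) :
    vbracket (eulerVF n) X = (i : ℝ) • X := by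
  rcases hX with ⟨d, hd, hXd⟩ | rfl
  · funext j
    have hi : (i : ℝ) = d - 1 := by
      rw [show i = (d : ℤ) - 1 by omega]
      push_cast
      ring
    simp only [vbracket_apply, eulerVF_apply, toDerivation_apply_X]
    rw [toDerivation_apply, Pi.smul_apply, hi, sub_smul, one_smul, Nat.cast_smul_eq_nsmul]
    exact congrArg (· - X j) (hXd j).sum_X_mul_pderiv
  · rw [vbracket_zero_right, smul_zero]

theorem eq_sum_smul_constVF {X : PVF n} (hX : IsHomog (-1) X) :
    X = ∑ i, coeff 0 (X i) • constVF i := by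
  funext j
  simpa [Finset.sum_apply, constVF, smul_eq_C_mul] using
    ((isHomog_iff_forall_isHomogeneous (by norm_num)).mp hX j).eq_C_coeff_zero

theorem eq_zero_of_isHomog_of_vbracket_constVF {i : ℤ} {X : PVF n} (hX : IsHomog i X)
    (hi : i ≠ -1) (h : ∀ k, vbracket X (constVF k) = 0) : X = 0 := by
  rcases hX with ⟨d, hd, hXd⟩ | rfl
  · funext j
    exact (hXd j).eq_zero_of_forall_pderiv_eq_zero (by omega) fun k => by
      simpa [vbracket_constVF] using congrFun (h k) j
  · rfl

theorem exists_isHomog_zero_vbracket_constVF {c : Fin n → PVF n}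
    (hc : ∀ i, IsHomog (-1) (c i)) :
    ∃ X₀ : PVF n, IsHomog 0 X₀ ∧ ∀ i, vbracket X₀ (constVF i) = c i := by
  have hc0 i k : (c i k).IsHomogeneous 0 :=
    (isHomog_iff_forall_isHomogeneous (by norm_num)).mp (hc i) k
  refine ⟨fun j => -∑ m, c m j * MvPolynomial.X m,
    (isHomog_iff_forall_isHomogeneous (d := 1) (by norm_num)).mpr
      fun j => (IsHomogeneous.sum _ _ _ fun m _ => ?_).neg,
    fun i => funext fun j => ?_⟩
  · simpa using (hc0 m j).mul (isHomogeneous_X ℝ m)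
  · simp [vbracket_constVF, (hc0 _ j).pderiv_eq_zero, pderiv_X, Pi.single_apply]

noncomputable def homogeneousComponentField (d : ℕ) (Z : PVF n) : PVF n :=
  fun j => homogeneousComponent d (Z j)

theorem isHomog_homogeneousComponentField (d : ℕ) (Z : PVF n) :
    IsHomog ((d : ℤ) - 1) (homogeneousComponentField d Z) :=
  (isHomog_iff_forall_isHomogeneous (by ring)).mpr fun j =>
    homogeneousComponent_isHomogeneous d (Z j)

theorem exists_totalDegree_le (Z : PVF n) : ∃ N, ∀ j, (Z j).totalDegree ≤ N :=
  ⟨_, fun j => Finset.le_sup (f := fun j => (Z j).totalDegree) (Finset.mem_univ j)⟩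

theorem sum_homogeneousComponentField {Z : PVF n} {N : ℕ} (hN : ∀ j, (Z j).totalDegree ≤ N) :
    ∑ d ∈ Finset.range (N + 1), homogeneousComponentField d Z = Z := by
  funext j
  rw [Finset.sum_apply, ← sum_homogeneousComponent (Z j)]
  refine (Finset.sum_subset (Finset.range_subset_range.mpr (by have := hN j; omega))
    fun d _ hd => ?_).symm
  exact homogeneousComponent_eq_zero d _ (by simpa using hd)

theorem homogeneousComponentField_mem {P : Submodule ℝ (PVF n)} (hE : eulerVF n ∈ P)
    (hbr : ∀ X ∈ P, ∀ Y ∈ P, vbracket X Y ∈ P) {Z : PVF n} (hZ : Z ∈ P) (d : ℕ) :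
    homogeneousComponentField d Z ∈ P := by
  obtain ⟨N, hN⟩ := exists_totalDegree_le Z
  replace hN j : (Z j).totalDegree ≤ N + d := (hN j).trans (Nat.le_add_right N d)
  refine Submodule.mem_of_sum_mem_of_apply_eq_smul (φ := adV (eulerVF n))
    (μ := fun d : ℕ => (d - 1 : ℝ)) (fun X hX => hbr _ hE X hX)
    (fun a _ b _ hab => by simpa using hab) (fun e _ => ?_)
    ((sum_homogeneousComponentField hN).symm ▸ hZ)
    (Finset.mem_range.mpr (show d < N + d + 1 by omega))
  simpa using vbracket_eulerVF (isHomog_homogeneousComponentField e Z)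

def IsQuasiderivation (P : Submodule ℝ (PVF n)) (f g : PVF n →ₗ[ℝ] PVF n) : Prop :=
  ∀ X ∈ P, ∀ Y ∈ P, vbracket (f X) Y + vbracket X (f Y) = g (vbracket X Y)

namespace IsQuasiderivation

variable {P : Submodule ℝ (PVF n)} {f g : PVF n →ₗ[ℝ] PVF n}

theorem sub_adV (h : IsQuasiderivation P f g) (X₀ : PVF n) :
    IsQuasiderivation P (f - adV X₀) (g - adV X₀) := fun X hX Y hY => by
  simp only [LinearMap.sub_apply, adV_apply, vbracket_sub_left_s17, vbracket_sub_right,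
    ← h X hX Y hY, vbracket_leibniz X₀ X Y]
  abel

theorem apply_eq_of_isHomog (h : IsQuasiderivation P f g) (hE : eulerVF n ∈ P)
    (hfE : f (eulerVF n) = 0) {i : ℤ} (hi : i ≠ 0) {Z : PVF n} (hZ : Z ∈ P)
    (hZi : IsHomog i Z) (hfZ : IsHomog i (f Z)) : g Z = f Z := by
  have := h _ hE Z hZ
  rw [hfE, vbracket_zero_left, zero_add, vbracket_eulerVF hfZ, vbracket_eulerVF hZi,
    map_smul] at this
  exact smul_right_injective _ (Int.cast_ne_zero.mpr hi) this.symm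

theorem eq_zero_of_isHomog {D h : PVF n →ₗ[ℝ] PVF n} (hqd : IsQuasiderivation P D h)
    (hE : eulerVF n ∈ P) (hconst : ∀ i : Fin n, constVF i ∈ P)
    (hbr : ∀ X ∈ P, ∀ Y ∈ P, vbracket X Y ∈ P)
    (h11 : ∀ X ∈ P, IsHomog 1 X → ∀ Y ∈ P, IsHomog (-1) Y →
      ∃ A ∈ P, ∃ B ∈ P, IsHomog 0 A ∧ IsHomog 0 B ∧ vbracket X Y = vbracket A B)
    (hD : ∀ i : ℤ, ∀ X ∈ P, IsHomog i X → IsHomog i (D X)) (hDE : D (eulerVF n) = 0)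
    (hDc : ∀ i, D (constVF i) = 0) (d : ℕ) :
    ∀ Y ∈ P, IsHomog ((d : ℤ) - 1) Y → D Y = 0 := by
  induction d using Nat.strong_induction_on with | _ d ih => ?_
  intro Y hY hYd
  rcases d with _ | e
  · rw [eq_sum_smul_constVF (X := Y) (by simpa using hYd)]
    simp [hDc]
  have hYe : IsHomog e Y := by simpa using hYd
  refine eq_zero_of_isHomog_of_vbracket_constVF (hD _ Y hY hYe) (by omega) fun k => ?_
  have hYk : vbracket Y (constVF k) ∈ P := hbr _ hY _ (hconst k)
  have hYk_deg : IsHomog ((e : ℤ) - 1) (vbracket Y (constVF k)) :=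
    hYe.vbracket (isHomog_constVF k)
  have hYk_zero : h (vbracket Y (constVF k)) = 0 := by
    rcases eq_or_ne e 1 with rfl | he
    · obtain ⟨A, hA, B, hB, hA0, hB0, hAB⟩ :=
        h11 Y hY hYe (constVF k) (hconst k) (isHomog_constVF k)
      rw [hAB, ← hqd A hA B hB, ih 1 (by omega) A hA (by simpa using hA0),
        ih 1 (by omega) B hB (by simpa using hB0), vbracket_zero_left, vbracket_zero_right,
        add_zero]
    · rw [hqd.apply_eq_of_isHomog hE hDE (by omega) hYk hYk_deg (hD _ _ hYk hYk_deg),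
        ih e (by omega) _ hYk hYk_deg]
  simpa [hDc, vbracket_zero_right, hYk_zero] using hqd Y hY (constVF k) (hconst k)

theorem eq_zero {D h : PVF n →ₗ[ℝ] PVF n} (hqd : IsQuasiderivation P D h)
    (hE : eulerVF n ∈ P) (hconst : ∀ i : Fin n, constVF i ∈ P)
    (hbr : ∀ X ∈ P, ∀ Y ∈ P, vbracket X Y ∈ P)
    (h11 : ∀ X ∈ P, IsHomog 1 X → ∀ Y ∈ P, IsHomog (-1) Y →
      ∃ A ∈ P, ∃ B ∈ P, IsHomog 0 A ∧ IsHomog 0 B ∧ vbracket X Y = vbracket A B)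
    (hD : ∀ i : ℤ, ∀ X ∈ P, IsHomog i X → IsHomog i (D X)) (hDE : D (eulerVF n) = 0)
    (hDc : ∀ i, D (constVF i) = 0) {Z : PVF n} (hZ : Z ∈ P) : D Z = 0 := by
  obtain ⟨N, hN⟩ := exists_totalDegree_le Z
  rw [← sum_homogeneousComponentField hN, map_sum]
  exact Finset.sum_eq_zero fun d _ => hqd.eq_zero_of_isHomog hE hconst hbr h11 hD hDE hDc d _
    (homogeneousComponentField_mem hE hbr hZ d) (isHomog_homogeneousComponentField d Z)

end IsQuasiderivation

theorem qder0_is_inner_plus_k_general (n : ℕ) (P : Submodule ℝ (PVF n))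
    (hE : eulerVF n ∈ P)
    (hconst : ∀ i : Fin n, constVF i ∈ P)
    (hbr : ∀ X ∈ P, ∀ Y ∈ P, vbracket X Y ∈ P)
    (h11 : ∀ X ∈ P, IsHomog 1 X → ∀ Y ∈ P, IsHomog (-1) Y →
      ∃ A ∈ P, ∃ B ∈ P, IsHomog 0 A ∧ IsHomog 0 B ∧ vbracket X Y = vbracket A B)
    (f g : PVF n →ₗ[ℝ] PVF n)
    (hf0 : ∀ i : ℤ, ∀ X ∈ P, IsHomog i X → IsHomog i (f X))
    (hqd : ∀ X ∈ P, ∀ Y ∈ P, vbracket (f X) Y + vbracket X (f Y) = g (vbracket X Y))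
    (hfE : f (eulerVF n) = 0) :
    ∃ X₀ : PVF n, IsHomog 0 X₀ ∧
      (∀ Z ∈ P, f Z = vbracket X₀ Z) ∧
      (∀ i : ℤ, i ≠ 0 → ∀ Z ∈ P, IsHomog i Z → g Z = vbracket X₀ Z) ∧
      (∀ Z ∈ P, ∀ W ∈ P, g (vbracket Z W) = vbracket X₀ (vbracket Z W)) := by
  obtain ⟨X₀, hX₀, hX₀c⟩ := exists_isHomog_zero_vbracket_constVF fun i =>
    hf0 _ _ (hconst i) (isHomog_constVF i)
  have hX₀E : vbracket X₀ (eulerVF n) = 0 := by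
    rw [vbracket_swap, vbracket_eulerVF hX₀, Int.cast_zero, zero_smul, neg_zero]
  have hf : ∀ Z ∈ P, f Z = vbracket X₀ Z := fun Z hZ => sub_eq_zero.mp <|
    (IsQuasiderivation.sub_adV hqd X₀).eq_zero hE hconst hbr h11
      (fun i Z hZ hZi => (hf0 i Z hZ hZi).sub (by simpa using hX₀.vbracket hZi))
      (by simp [hfE, hX₀E]) (by simp [hX₀c]) hZ
  refine ⟨X₀, hX₀, hf, fun i hi Z hZ hZi => ?_, fun Z hZ W hW => ?_⟩
  · rw [← hf Z hZ]
    exact IsQuasiderivation.apply_eq_of_isHomog hqd hE hfE hi hZ hZi (hf0 i Z hZ hZi)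
  · rw [← hqd Z hZ W hW, hf Z hZ, hf W hW]
    exact (vbracket_leibniz X₀ Z W).symm

theorem qder0_is_inner_plus_k (n : ℕ) (hn : 2 ≤ n) (P : Submodule ℝ (PVF n))
    (hE : eulerVF n ∈ P)
    (hconst : ∀ i : Fin n, constVF i ∈ P)
    (hbr : ∀ X ∈ P, ∀ Y ∈ P, vbracket X Y ∈ P)
    (h11 : ∀ X ∈ P, IsHomog 1 X → ∀ Y ∈ P, IsHomog (-1) Y →
      ∃ A ∈ P, ∃ B ∈ P, IsHomog 0 A ∧ IsHomog 0 B ∧ vbracket X Y = vbracket A B)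
    (f g : PVF n →ₗ[ℝ] PVF n)
    (hfP : ∀ X ∈ P, f X ∈ P) (hgP : ∀ X ∈ P, g X ∈ P)
    (hf0 : ∀ i : ℤ, ∀ X ∈ P, IsHomog i X → IsHomog i (f X))
    (hg0 : ∀ i : ℤ, ∀ X ∈ P, IsHomog i X → IsHomog i (g X))
    (hqd : ∀ X ∈ P, ∀ Y ∈ P, vbracket (f X) Y + vbracket X (f Y) = g (vbracket X Y))
    (hfE : f (eulerVF n) = 0) :
    ∃ X₀ : PVF n, IsHomog 0 X₀ ∧
      (∀ Z ∈ P, f Z = vbracket X₀ Z) ∧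
      (∀ i : ℤ, i ≠ 0 → ∀ Z ∈ P, IsHomog i Z → g Z = vbracket X₀ Z) ∧
      (∀ Z ∈ P, ∀ W ∈ P, g (vbracket Z W) = vbracket X₀ (vbracket Z W)) :=
  qder0_is_inner_plus_k_general n P hE hconst hbr h11 f g hf0 hqd hfE
end
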